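/- Let m ≥ 2 and R ≥ 0 be integers and set k₀ := m·(R+1) and k₁ := (m+1)·(R+1). Then for every integer o, every b ∈ {0,1}, and every positive integer L_max, the number of natural numbers L with L ≤ L_max such that the integer interval [k_b·L, k_b·L + R] contains some element of the arithmetic progression {k_{1−b}·L' + o : L' ∈ ℤ} is at most L_max/m + 1 (as real numbers). -/

import Mathlib

/-!
Write `c = R + 1`, so the windows are `[N c L, N c L + R]` and the progression is `M c ℤ + o`
with `N, M` the coprime pair `{m, m + 1}`. If windows at `L₁` and `L₂` are hit by `M c L₁' + o`
and `M c L₂' + o`, then `c (M (L₁' - L₂') - N (L₁ - L₂))` has absolute value at most `R < c`,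
hence vanishes; so `M ∣ N (L₁ - L₂)` and, by coprimality, `L₁ ≡ L₂ [MOD M]`. A residue class
mod `M ≥ m` meets `[0, L_max]` in at most `L_max / m + 1` points.
-/

open Set

theorem Set.ncard_le_div_add_one_of_modEq {S : Set ℕ} {M Lmax : ℕ} (hS : S ⊆ Iic Lmax)
    (hmod : ∀ a ∈ S, ∀ b ∈ S, a ≡ b [MOD M]) : S.ncard ≤ Lmax / M + 1 := by
  have hinj : InjOn (· / M) S := fun a ha b hb hab => by
    rw [← Nat.div_add_mod a M, ← Nat.div_add_mod b M, hmod a ha b hb]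
    exact congrArg (M * · + b % M) hab
  calc S.ncard ≤ (Iic (Lmax / M)).ncard :=
        ncard_le_ncard_of_injOn _ (fun a ha => Nat.div_le_div_right (hS ha)) hinj
    _ = Lmax / M + 1 := by rw [← Finset.coe_Iic, ncard_coe_finset, Nat.card_Iic]

theorem dvd_sub_of_windows_hit_progression {N M R o L₁ L₂ L₁' L₂' : ℤ} (hR : 0 ≤ R)
    (hNM : IsCoprime N M)
    (h₁ : N * (R + 1) * L₁ ≤ M * (R + 1) * L₁' + o ∧ M * (R + 1) * L₁' + o ≤ N * (R + 1) * L₁ + R)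
    (h₂ : N * (R + 1) * L₂ ≤ M * (R + 1) * L₂' + o ∧ M * (R + 1) * L₂' + o ≤ N * (R + 1) * L₂ + R) :
    M ∣ L₂ - L₁ := by
  set t := M * (L₂' - L₁') - N * (L₂ - L₁)
  have hbound : |(R + 1) * t| < R + 1 := by
    rw [abs_lt]
    constructor <;> linarith
  have ht : t = 0 :=
    (mul_eq_zero.mp (Int.eq_zero_of_abs_lt_dvd (dvd_mul_right _ _) hbound)).resolve_left
      (by omega)
  exact hNM.symm.dvd_of_dvd_mul_left ⟨L₂' - L₁', by linarith⟩

theorem ncard_windows_hitting_progression_le {N : ℤ} {M : ℕ} (hNM : IsCoprime N M)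
    (R : ℕ) (o : ℤ) (Lmax : ℕ) :
    {L : ℕ | L ≤ Lmax ∧ ∃ L' : ℤ,
        N * (R + 1) * (L : ℤ) ≤ M * (R + 1) * L' + o ∧
        M * (R + 1) * L' + o ≤ N * (R + 1) * (L : ℤ) + (R : ℤ)}.ncard ≤ Lmax / M + 1 :=
  ncard_le_div_add_one_of_modEq (fun _ hL => hL.1) fun _ ⟨_, _, h₁⟩ _ ⟨_, _, h₂⟩ =>
    Nat.modEq_iff_dvd.mpr (dvd_sub_of_windows_hit_progression R.cast_nonneg hNM h₁ h₂)

theorem counting_windows_hitting_progression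
    (m R : ℕ) (hm : 2 ≤ m) (k : Fin 2 → ℤ)
    (hk0 : k 0 = (m : ℤ) * (R + 1)) (hk1 : k 1 = ((m : ℤ) + 1) * (R + 1))
    (o : ℤ) (b : Fin 2) (Lmax : ℕ) :
    (({L : ℕ | L ≤ Lmax ∧ ∃ L' : ℤ,
        k b * (L : ℤ) ≤ k (1 - b) * L' + o ∧
        k (1 - b) * L' + o ≤ k b * (L : ℤ) + (R : ℤ)}.ncard : ℝ))
      ≤ (Lmax : ℝ) / (m : ℝ) + 1 := by
  have hreal : ∀ M : ℕ, m ≤ M → ((Lmax / M + 1 : ℕ) : ℝ) ≤ Lmax / m + 1 := fun M hM => by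
    have hm₀ : (0 : ℝ) < m := by exact_mod_cast (by omega : 0 < m)
    push_cast
    gcongr
    calc ((Lmax / M : ℕ) : ℝ) ≤ Lmax / M := Nat.cast_div_le
      _ ≤ Lmax / m := by gcongr
  fin_cases b
  · have hcount := ncard_windows_hitting_progression_le (N := m) (M := m + 1)
      ⟨-1, 1, by push_cast; ring⟩ R o Lmax
    push_cast at hcount
    simp only [Fin.zero_eta, show (1 - 0 : Fin 2) = 1 from rfl, hk0, hk1]
    exact (Nat.cast_le.mpr hcount).trans (hreal _ (by omega))
  · have hcount := ncard_windows_hitting_progression_le (N := m + 1) (M := m)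
      ⟨1, -1, by ring⟩ R o Lmax
    simp only [Fin.mk_one, show (1 - 1 : Fin 2) = 0 from rfl, hk0, hk1]
    exact (Nat.cast_le.mpr hcount).trans (hreal _ le_rfl)
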